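/- arXiv:1602.05407 — 5 statements merged into one kernel-verified Lean document; each statement's English description precedes it below -/
import Mathlib

section
/- Let D ≥ 1 and let p_1, …, p_D be nonnegative real numbers with Σ_{i=1}^D p_i = 1. Then Σ_{(i,j) : p_i+p_j ≠ 0} (p_i−p_j)²/(p_i+p_j) ≥ 2·(D − (Σ_{i=1}^D √p_i)²), where the sum on the left runs over all ordered pairs (i,j) with p_i + p_j ≠ 0. -/
/-! With `s i = √(p i)`, the left side is `∑ i, ∑ j, (s i - s j) ^ 2 = 2 (D ∑ s i ^ 2 - (∑ s i) ^ 2)`,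
and termwise `(s i - s j) ^ 2 ≤ (s i ^ 2 - s j ^ 2) ^ 2 / (s i ^ 2 + s j ^ 2)`
because `s i ^ 2 + s j ^ 2 ≤ (s i + s j) ^ 2`. -/

open Finset

theorem Finset.sum_sum_sub_sq {ι R : Type*} [CommRing R] (s : Finset ι) (x : ι → R) :
    ∑ i ∈ s, ∑ j ∈ s, (x i - x j) ^ 2 = 2 * (#s * ∑ i ∈ s, x i ^ 2 - (∑ i ∈ s, x i) ^ 2) := by
  simp only [sub_sq, sum_add_distrib, sum_sub_distrib, sum_const, nsmul_eq_mul, ← mul_sum,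
    ← sum_mul]
  ring

theorem sq_sub_le_sq_sub_sq_div {K : Type*} [Field K] [LinearOrder K] [IsStrictOrderedRing K]
    {x y : K} (hx : 0 ≤ x) (hy : 0 ≤ y) :
    (x - y) ^ 2 ≤ (x ^ 2 - y ^ 2) ^ 2 / (x ^ 2 + y ^ 2) := by
  rcases (add_nonneg (sq_nonneg x) (sq_nonneg y)).eq_or_lt with h | h
  · have hx0 : x = 0 := by nlinarith
    have hy0 : y = 0 := by nlinarith
    simp [hx0, hy0]
  · rw [le_div_iff₀ h, sq_sub_sq, mul_pow, mul_comm ((x + y) ^ 2)]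
    exact mul_le_mul_of_nonneg_left (by nlinarith [mul_nonneg hx hy]) (sq_nonneg _)

theorem sq_sqrt_sub_sqrt_le_div {a b : ℝ} (ha : 0 ≤ a) (hb : 0 ≤ b) :
    (√a - √b) ^ 2 ≤ (a - b) ^ 2 / (a + b) := by
  simpa only [Real.sq_sqrt ha, Real.sq_sqrt hb] using
    sq_sub_le_sq_sub_sq_div (Real.sqrt_nonneg a) (Real.sqrt_nonneg b)

theorem sum_ratio_ge_general (D : ℕ) (p : Fin D → ℝ)
    (hp : ∀ i, 0 ≤ p i) (hsum : ∑ i, p i = 1) :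
    2 * (D - (∑ i, Real.sqrt (p i)) ^ 2) ≤
      ∑ i, ∑ j, (if p i + p j = 0 then 0 else (p i - p j) ^ 2 / (p i + p j)) := by
  have hsqrt_sq : ∑ i, √(p i) ^ 2 = 1 := by simpa only [Real.sq_sqrt (hp _)] using hsum
  calc 2 * (D - (∑ i, √(p i)) ^ 2) = ∑ i, ∑ j, (√(p i) - √(p j)) ^ 2 := by
        rw [sum_sum_sub_sq, hsqrt_sq, card_univ, Fintype.card_fin, mul_one]
    _ ≤ ∑ i, ∑ j, (p i - p j) ^ 2 / (p i + p j) := by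
        gcongr with i _ j _
        exact sq_sqrt_sub_sqrt_le_div (hp i) (hp j)
    _ = ∑ i, ∑ j, (if p i + p j = 0 then 0 else (p i - p j) ^ 2 / (p i + p j)) := by
        -- the `if` only restates the junk value `_ / 0 = 0`
        refine sum_congr rfl fun i _ => sum_congr rfl fun j _ => ?_
        exact (ite_eq_right_iff.mpr fun h => by rw [h, div_zero]).symm

/-- for nonnegative reals `p_1, …, p_D` summing to `1`,
`Σ_{(i,j) : p_i+p_j ≠ 0} (p_i−p_j)²/(p_i+p_j) ≥ 2·(D − (Σ_i √p_i)²)`. -/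
theorem sum_ratio_ge (D : ℕ) (hD : 1 ≤ D) (p : Fin D → ℝ)
    (hp : ∀ i, 0 ≤ p i) (hsum : ∑ i, p i = 1) :
    2 * (D - (∑ i, Real.sqrt (p i)) ^ 2) ≤
      ∑ i, ∑ j, (if p i + p j = 0 then 0 else (p i - p j) ^ 2 / (p i + p j)) :=
  sum_ratio_ge_general D p hp hsum
end

section
/- Let d ≥ 1 and N ≥ 0 be integers and let λ : Fin d → ℝ satisfy Σ_{i} λ_i = 0. Then Σ over all k : Fin d → ℕ with Σ_i k_i = N of (Σ_i k_i·λ_i)² equals (N(N+d)/(d(d+1)))·(Σ_i λ_i²)·C(N+d−1, N), where C denotes the binomial coefficient. -/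
/-!
Shifting every occupation number by one does not change `∑ k_i λ_i`, because `∑ λ_i = 0`. The
shifted second moments are sums of products of `multichoose` values (`k + 1 = multichoose 2 k`,
`(k + 1)(k + 2) / 2 = multichoose 3 k`), which the Vandermonde identity for `multichoose`
evaluates: `∑_k (k_i + 1)(k_j + 1)` is `multichoose (d + 2) N` for `i ≠ j` and exceeds it by
`multichoose (d + 2) N - multichoose (d + 1) N` for `i = j`. Expanding the square, the constant
part contributes a multiple of `(∑ λ_i)² = 0`, and the diagonal excess is the claimed coefficient.
-/

open Finset

-- `choose (-m) k = (-1)^k multichoose m k` turns this into Chu–Vandermonde over `ℤ`.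
theorem Nat.multichoose_add (a b n : ℕ) :
    (a + b).multichoose n = ∑ p ∈ antidiagonal n, a.multichoose p.1 * b.multichoose p.2 := by
  have choose_neg (m k : ℕ) :
      Ring.choose (-(m : ℤ)) k = (-1) ^ k * (m.multichoose k : ℤ) := by
    rw [Ring.choose_neg', Nat.multichoose_eq, Int.negOnePow_def, Units.smul_def]
    rfl
  have h := Ring.add_choose_eq (r := -(a : ℤ)) (s := -(b : ℤ)) n (Commute.all _ _)
  rw [← neg_add, ← Nat.cast_add, choose_neg] at h
  have hsum : ∑ p ∈ antidiagonal n, Ring.choose (-(a : ℤ)) p.1 * Ring.choose (-(b : ℤ)) p.2 =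
      (-1) ^ n * ∑ p ∈ antidiagonal n, (a.multichoose p.1 * b.multichoose p.2 : ℤ) := by
    rw [mul_sum]
    refine sum_congr rfl fun p hp => ?_
    rw [choose_neg, choose_neg, ← mem_antidiagonal.mp hp, pow_add]
    ring
  rw [hsum, mul_right_inj' (pow_ne_zero _ (by norm_num))] at h
  exact_mod_cast h

theorem Nat.cast_multichoose_three {K : Type*} [Field K] [CharZero K] (k : ℕ) :
    (Nat.multichoose 3 k : K) = (k + 1) * (k + 2) / 2 := by
  rw [Nat.multichoose_eq, show 3 + k - 1 = k + 2 by omega, Nat.choose_symm_add,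
    Nat.cast_choose_two]
  push_cast
  ring

theorem Nat.cast_multichoose_add_two_sub_multichoose_add_one {K : Type*} [Field K] [CharZero K]
    {d : ℕ} (hd : 0 < d) (N : ℕ) :
    ((d + 2).multichoose N - (d + 1).multichoose N : K) =
      (N : K) * (N + d) / (d * (d + 1)) * (N + d - 1).choose N := by
  obtain ⟨e, rfl⟩ := Nat.exists_eq_add_one_of_ne_zero hd.ne'
  cases N with
  | zero => simp
  | succ n =>
    rw [Nat.multichoose_succ_succ, Nat.cast_add, add_sub_cancel_left, Nat.multichoose_eq,
      show e + 1 + 1 + 1 + n - 1 = n + (e + 2) by omega,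
      show n + 1 + (e + 1) - 1 = (n + 1) + e by omega,
      Nat.cast_add_choose, Nat.cast_add_choose]
    push_cast [Nat.factorial_succ, show n + (e + 2) = n + 1 + e + 1 by omega]
    field_simp
    ring

namespace Finset

theorem sum_piAntidiag_prod_multichoose {ι : Type*} [DecidableEq ι] (s : Finset ι)
    (a : ι → ℕ) (n : ℕ) :
    ∑ k ∈ s.piAntidiag n, ∏ i ∈ s, (a i).multichoose (k i) = (∑ i ∈ s, a i).multichoose n := by
  induction s using Finset.cons_induction generalizing n with
  | empty => cases n <;> simp
  | cons i s hi ih =>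
    rw [piAntidiag_cons, sum_disjiUnion, sum_cons, Nat.multichoose_add]
    refine sum_congr rfl fun p _ => ?_
    rw [sum_map, ← ih, mul_sum]
    refine sum_congr rfl fun f hf => ?_
    have hfi : f i = 0 := by
      by_contra h
      exact hi ((mem_piAntidiag.mp hf).2 i h)
    rw [prod_cons]
    congr 1
    · simp [hfi]
    · refine prod_congr rfl fun j hj => ?_
      simp [ne_of_mem_of_not_mem hj hi]

variable {ι : Type*} [Fintype ι] [DecidableEq ι]

theorem sum_piAntidiag_univ_multichoose_one_add (m n : ℕ) (i : ι) :
    ∑ k ∈ piAntidiag univ n, (1 + m).multichoose (k i) = (Fintype.card ι + m).multichoose n := by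
  have h := sum_piAntidiag_prod_multichoose univ (1 + Pi.single i m) n
  simp only [Pi.add_apply, Pi.one_apply, sum_add_distrib, sum_const, card_univ, smul_eq_mul,
    mul_one, Fintype.sum_pi_single'] at h
  rw [← h]
  refine sum_congr rfl fun k _ => ?_
  rw [Fintype.prod_eq_single i fun l hl => by simp [hl]]
  simp

theorem sum_piAntidiag_univ_succ_mul_succ_of_ne (n : ℕ) {i j : ι} (hij : i ≠ j) :
    ∑ k ∈ piAntidiag univ n, (k i + 1) * (k j + 1) = (Fintype.card ι + 2).multichoose n := by
  have h := sum_piAntidiag_prod_multichoose univ (1 + Pi.single i 1 + Pi.single j 1) n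
  simp only [Pi.add_apply, Pi.one_apply, sum_add_distrib, sum_const, card_univ, smul_eq_mul,
    mul_one, Fintype.sum_pi_single'] at h
  rw [← h]
  refine sum_congr rfl fun k _ => ?_
  rw [Fintype.prod_eq_mul i j hij fun l hl => by simp [hl.1, hl.2]]
  simp [hij, hij.symm, Nat.multichoose_two]

theorem sum_piAntidiag_univ_succ_mul_succ (n : ℕ) (i j : ι) :
    ∑ k ∈ piAntidiag univ n, ((k i : ℝ) + 1) * ((k j : ℝ) + 1) =
      (Fintype.card ι + 2).multichoose n +
        if i = j then
          ((Fintype.card ι + 2).multichoose n - (Fintype.card ι + 1).multichoose n : ℝ)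
        else 0 := by
  split_ifs with hij
  · subst hij
    have hsq (k : ℕ) : ((k : ℝ) + 1) * (k + 1) =
        2 * ((1 + 2).multichoose k : ℕ) - ((1 + 1).multichoose k : ℕ) := by
      rw [Nat.cast_multichoose_three, Nat.multichoose_two]
      push_cast
      ring
    simp only [hsq, sum_sub_distrib, ← mul_sum, ← Nat.cast_sum,
      sum_piAntidiag_univ_multichoose_one_add]
    ring
  · rw [add_zero]
    exact_mod_cast sum_piAntidiag_univ_succ_mul_succ_of_ne n hij

theorem sum_piAntidiag_univ_sq_of_sum_eq_zero (n : ℕ) (lam : ι → ℝ) (hlam : ∑ i, lam i = 0) :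
    ∑ k ∈ piAntidiag univ n, (∑ i, (k i : ℝ) * lam i) ^ 2 =
      ((Fintype.card ι + 2).multichoose n - (Fintype.card ι + 1).multichoose n : ℝ) *
        ∑ i, lam i ^ 2 := by
  have hshift (k : ι → ℕ) : ∑ i, (k i : ℝ) * lam i = ∑ i, ((k i : ℝ) + 1) * lam i := by
    simp [add_mul, sum_add_distrib, hlam]
  calc ∑ k ∈ piAntidiag univ n, (∑ i, (k i : ℝ) * lam i) ^ 2
      = ∑ k ∈ piAntidiag univ n, ∑ i, ∑ j,
          lam i * lam j * (((k i : ℝ) + 1) * ((k j : ℝ) + 1)) := by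
        refine sum_congr rfl fun k _ => ?_
        rw [hshift, sq, sum_mul_sum]
        exact sum_congr rfl fun i _ => sum_congr rfl fun j _ => by ring
    _ = ∑ i, ∑ j, lam i * lam j *
          ∑ k ∈ piAntidiag univ n, ((k i : ℝ) + 1) * ((k j : ℝ) + 1) := by
        rw [sum_comm]
        simp only [mul_sum]
        exact sum_congr rfl fun i _ => sum_comm
    _ = _ := by
        simp_rw [sum_piAntidiag_univ_succ_mul_succ]
        simp only [mul_add, sum_add_distrib, mul_ite, mul_zero, sum_ite_eq, mem_univ, if_true,
          ← sum_mul, ← mul_sum, hlam, zero_mul, zero_add, ← sq]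
        exact mul_comm _ _

end Finset

/-- for `d ≥ 1`, `N ≥ 0` and `λ : Fin d → ℝ` with `Σ_i λ_i = 0`,
the sum over all occupation numbers `k : Fin d → ℕ` with `Σ_i k_i = N` of `(Σ_i k_i·λ_i)²`
equals `(N(N+d)/(d(d+1)))·(Σ_i λ_i²)·C(N+d−1, N)`. -/
theorem sum_occupation_sq (d N : ℕ) (hd : 1 ≤ d) (lam : Fin d → ℝ)
    (hlam : ∑ i, lam i = 0) :
    ∑ k ∈ Finset.Nat.antidiagonalTuple d N, (∑ i, (k i : ℝ) * lam i) ^ 2 =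
      ((N : ℝ) * (N + d) / (d * (d + 1))) * (∑ i, lam i ^ 2) * (N + d - 1).choose N := by
  rw [← piAntidiag_univ_fin_eq_antidiagonalTuple,
    sum_piAntidiag_univ_sq_of_sum_eq_zero N lam hlam, Fintype.card_fin,
    Nat.cast_multichoose_add_two_sub_multichoose_add_one hd]
  ring
end

section
/- Let d ≥ 2 and N ≥ 0 be integers. Then d·(d+1)·Σ_{i=0}^{N} i²·C(N−i+d−2, N−i) = N·(2N+d−1)·C(N+d−1, N), where C denotes the binomial coefficient. -/
/-!
Write `d = k + 2` and `i ^ 2 = 2 * C(i, 2) + C(i, 1)`. The sum then splits into two upper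
Vandermonde convolutions `∑ C(i, a) * C(N - i + k, k) = C(N + k + 1, a + k + 1)`, and the two
resulting binomials are expressed through `C(N + k + 1, k + 1)` by the absorption identity
`C(n, j + 1) * (j + 1) = C(n, j) * (n - j)`.
-/

open Finset Nat

namespace Nat

theorem sum_antidiagonal_choose_mul_add_choose (a e N : ℕ) :
    ∑ p ∈ antidiagonal N, p.1.choose a * (p.2 + e).choose e =
      (N + e + 1).choose (a + e + 1) := by
  induction N generalizing a with
  | zero => cases a <;> simp [choose_eq_zero_of_lt]
  | succ N ih =>
    rw [Finset.Nat.sum_antidiagonal_succ]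
    cases a with
    | zero =>
      have := ih 0
      simp only [choose_zero_right, one_mul, zero_add] at this ⊢
      rw [this, show N + 1 + e = N + e + 1 by omega, choose_succ_succ' (N + e + 1) e]
    | succ a =>
      rw [show N + 1 + e + 1 = N + e + 1 + 1 by omega, show a + 1 + e + 1 = a + e + 1 + 1 by omega,
        choose_succ_succ', ← ih a, show a + e + 1 + 1 = a + 1 + e + 1 by omega, ← ih (a + 1)]
      simp [choose_succ_succ', add_mul, sum_add_distrib]

theorem sum_range_choose_mul_sub_add_choose (a e N : ℕ) :
    ∑ i ∈ range (N + 1), i.choose a * (N - i + e).choose e =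
      (N + e + 1).choose (a + e + 1) := by
  rw [← sum_antidiagonal_choose_mul_add_choose,
    Finset.Nat.sum_antidiagonal_eq_sum_range_succ (fun i j ↦ i.choose a * (j + e).choose e)]

theorem two_mul_choose_two_add_self (n : ℕ) : 2 * n.choose 2 + n = n ^ 2 := by
  rw [choose_two_right, Nat.mul_div_cancel' (even_mul_pred_self n).two_dvd]
  cases n with
  | zero => rfl
  | succ n => rw [add_tsub_cancel_right]; ring

theorem add_one_mul_add_two_mul_two_mul_choose_add_choose (N k : ℕ) :
    (k + 1) * (k + 2) * (2 * (N + k).choose (k + 2) + (N + k).choose (k + 1)) =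
      N * (2 * N + k) * (N + k).choose k := by
  have h1 := choose_succ_right_eq (N + k) k
  have h2 := choose_succ_right_eq (N + k) (k + 1)
  rw [show N + k - k = N by omega] at h1
  cases N with
  | zero => simp [choose_eq_zero_of_lt]
  | succ m =>
    rw [show m + 1 + k - (k + 1) = m by omega] at h2
    calc (k + 1) * (k + 2) * (2 * (m + 1 + k).choose (k + 2) + (m + 1 + k).choose (k + 1))
        = 2 * (k + 1) * ((m + 1 + k).choose (k + 1 + 1) * (k + 1 + 1))
          + (k + 2) * ((m + 1 + k).choose (k + 1) * (k + 1)) := by ring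
      _ = (2 * m + k + 2) * ((m + 1 + k).choose (k + 1) * (k + 1)) := by rw [h2]; ring
      _ = (m + 1) * (2 * (m + 1) + k) * (m + 1 + k).choose k := by rw [h1]; ring

end Nat

/-- for integers `d ≥ 2` and `N ≥ 0`,
`d·(d+1)·Σ_{i=0}^{N} i²·C(N−i+d−2, N−i) = N·(2N+d−1)·C(N+d−1, N)`. -/
theorem sum_sq_choose (d N : ℕ) (hd : 2 ≤ d) :
    d * (d + 1) * ∑ i ∈ Finset.range (N + 1), i ^ 2 * (N - i + d - 2).choose (N - i) =
      N * (2 * N + d - 1) * (N + d - 1).choose N := by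
  obtain ⟨k, rfl⟩ : ∃ k, d = k + 1 + 1 := ⟨d - 2, by omega⟩
  have hterm : ∀ i ∈ range (N + 1), i ^ 2 * (N - i + (k + 1 + 1) - 2).choose (N - i) =
      2 * (i.choose 2 * (N - i + k).choose k) + i.choose 1 * (N - i + k).choose k := by
    intro i _
    rw [← two_mul_choose_two_add_self, show N - i + (k + 1 + 1) - 2 = N - i + k by omega,
      choose_symm_add, choose_one_right]
    ring
  rw [sum_congr rfl hterm, sum_add_distrib, ← mul_sum, sum_range_choose_mul_sub_add_choose,
    sum_range_choose_mul_sub_add_choose, show N + (k + 1 + 1) - 1 = N + (k + 1) by omega,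
    show 2 * N + (k + 1 + 1) - 1 = 2 * N + (k + 1) by omega, show 2 + k + 1 = k + 1 + 2 by omega,
    show 1 + k + 1 = k + 1 + 1 by omega, show N + k + 1 = N + (k + 1) by omega, choose_symm_add]
  exact add_one_mul_add_two_mul_two_mul_choose_add_choose N (k + 1)
end

section
/- Let ρ ∈ M_D(ℂ) be a density matrix and H ∈ M_D(ℂ) be Hermitian. Then the quantum Fisher information satisfies F(ρ,H) ≥ ‖[H,ρ]‖₁², where [H,ρ] := Hρ − ρH and ‖A‖₁ := tr√(A†A) is the trace norm. -/
open Matrix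
open scoped ComplexOrder

noncomputable section

namespace Paper

/-- The quantum Fisher information of a state `ρ` with Hamiltonian `H`. -/
def QFI {n : Type*} [Fintype n] [DecidableEq n] (ρ H : Matrix n n ℂ) : ℝ :=
  if hρ : ρ.IsHermitian then
    2 * ∑ j, ∑ k,
      if hρ.eigenvalues j + hρ.eigenvalues k = 0 then 0
      else ((hρ.eigenvalues j - hρ.eigenvalues k) ^ 2 / (hρ.eigenvalues j + hρ.eigenvalues k)) *
        ‖star (fun i => (hρ.eigenvectorUnitary : Matrix n n ℂ) i j) ⬝ᵥ
          (H *ᵥ fun i => (hρ.eigenvectorUnitary : Matrix n n ℂ) i k)‖ ^ 2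
  else 0

open Classical in
/-- The square root of a positive semidefinite matrix (junk value `0` otherwise). -/
def msqrt {n : Type*} [Fintype n] [DecidableEq n] (A : Matrix n n ℂ) : Matrix n n ℂ :=
  if hA : A.PosSemidef then
    (hA.1.eigenvectorUnitary : Matrix n n ℂ) *
      diagonal (((↑) : ℝ → ℂ) ∘ Real.sqrt ∘ hA.1.eigenvalues) *
      (star hA.1.eigenvectorUnitary : Matrix n n ℂ)
  else 0

/-- The trace norm `‖A‖₁ = tr √(A†A)` of a matrix. -/
def traceNorm {n : Type*} [Fintype n] [DecidableEq n] (A : Matrix n n ℂ) : ℝ :=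
  (Matrix.trace (msqrt (Aᴴ * A))).re

end Paper

/-! `[H,ρ]` is skew-Hermitian, so `M = i[H,ρ]` is Hermitian and `S = sign M` is a unitary with
`S M = |M|`; hence `‖[H,ρ]‖₁ = tr |M| = |tr (S [H,ρ])|`. For any unitary `V`, in an eigenbasis of
`ρ = Σ pⱼ |eⱼ⟩⟨eⱼ|` one has `tr (V [H,ρ]) = Σⱼₖ Hⱼₖ Vₖⱼ (pₖ - pⱼ)`, and Cauchy–Schwarz with the
weights `pⱼ + pₖ` bounds its square by `(Σ (pⱼ - pₖ)² / (pⱼ + pₖ) |Hⱼₖ|²) · (Σ (pⱼ + pₖ) |Vₖⱼ|²)`,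
which is `F(ρ,H) / 2 · 2` because the rows and columns of `V` are unit vectors and `Σ pⱼ = 1`. -/

open scoped MatrixOrder

theorem Finset.sq_sum_mul_mul_abs_sub_le {ι : Type*} [Fintype ι] {p : ι → ℝ} (hp : ∀ i, 0 ≤ p i)
    (a b : ι → ι → ℝ) :
    (∑ j, ∑ k, a j k * b j k * |p j - p k|) ^ 2 ≤
      (∑ j, ∑ k, (p j - p k) ^ 2 / (p j + p k) * a j k ^ 2) *
        ∑ j, ∑ k, (p j + p k) * b j k ^ 2 := by
  have hsum (x : ι × ι) : 0 ≤ p x.1 + p x.2 := add_nonneg (hp x.1) (hp x.2)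
  simp only [← Finset.sum_product' Finset.univ Finset.univ]
  refine Finset.sum_sq_le_sum_mul_sum_of_sq_le_mul _ (fun x _ => by have := hsum x; positivity)
    (fun x _ => by have := hsum x; positivity) fun x _ => le_of_eq ?_
  by_cases h : p x.1 + p x.2 = 0
  · have h₁ : p x.1 = 0 := by linarith [hp x.1, hp x.2]
    have h₂ : p x.2 = 0 := by linarith [hp x.1, hp x.2]
    simp [h₁, h₂]
  · rw [mul_pow, sq_abs]
    field_simp

namespace Matrix

variable {n : Type*} [Fintype n]

theorem star_col_dotProduct_mulVec_col {𝕜 : Type*} [RCLike 𝕜] (U H : Matrix n n 𝕜) (j k : n) :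
    star (fun i => U i j) ⬝ᵥ (H *ᵥ fun i => U i k) = (star U * H * U) j k := by
  simp only [dotProduct, mulVec, mul_apply, star_apply, Pi.star_apply, Finset.sum_mul,
    Finset.mul_sum]
  rw [Finset.sum_comm]
  exact Finset.sum_congr rfl fun i _ => Finset.sum_congr rfl fun l _ => by ring

variable [DecidableEq n]

theorem IsHermitian.exists_mem_unitary_mul_eq_abs {M : Matrix n n ℂ} (hM : M.IsHermitian) :
    ∃ S ∈ unitary (Matrix n n ℂ), S * M = CFC.abs M := by
  -- `sign` is discontinuous, but the spectrum of a matrix is finite.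
  have hcont : ∀ f : ℝ → ℝ, ContinuousOn f (spectrum ℝ M) := fun f =>
    M.finite_real_spectrum.continuousOn f
  set sign : ℝ → ℝ := fun x => if 0 ≤ x then 1 else -1
  refine ⟨cfc sign M, (cfc_unitary_iff sign M hM (hcont _)).mpr fun x _ => ?_, ?_⟩
  · by_cases hx : 0 ≤ x <;> simp [sign, hx]
  calc cfc sign M * M = cfc sign M * cfc id M := by rw [cfc_id ℝ M]
    _ = cfc (fun x => sign x * id x) M := (cfc_mul _ _ M (hcont _) (hcont _)).symm
    _ = cfc (‖·‖) M := cfc_congr fun x _ => by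
        by_cases hx : 0 ≤ x
        · simp [sign, hx, abs_of_nonneg hx]
        · simp [sign, hx, abs_of_neg (not_le.mp hx)]
    _ = CFC.abs M := (CFC.abs_eq_cfc_norm M hM).symm

variable {𝕜 : Type*} [RCLike 𝕜]

theorem sum_norm_sq_row_of_mem_unitaryGroup {V : Matrix n n 𝕜} (hV : V ∈ unitaryGroup n 𝕜)
    (i : n) : ∑ j, ‖V i j‖ ^ 2 = 1 := by
  have h := congr_fun₂ (mem_unitaryGroup_iff.mp hV) i i
  simp only [mul_apply, star_apply, one_apply_eq, RCLike.star_def, RCLike.mul_conj] at h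
  exact_mod_cast h

theorem sum_norm_sq_col_of_mem_unitaryGroup {V : Matrix n n 𝕜} (hV : V ∈ unitaryGroup n 𝕜)
    (j : n) : ∑ i, ‖V i j‖ ^ 2 = 1 := by
  simpa [star_apply] using sum_norm_sq_row_of_mem_unitaryGroup (Unitary.star_mem hV) j

theorem sum_sum_add_mul_norm_sq_of_mem_unitaryGroup {V : Matrix n n 𝕜}
    (hV : V ∈ unitaryGroup n 𝕜) (p : n → ℝ) :
    ∑ j, ∑ k, (p j + p k) * ‖V k j‖ ^ 2 = 2 * ∑ i, p i := by
  simp only [add_mul, Finset.sum_add_distrib, ← Finset.mul_sum,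
    sum_norm_sq_col_of_mem_unitaryGroup hV, mul_one]
  rw [Finset.sum_comm]
  simp only [← Finset.mul_sum, sum_norm_sq_row_of_mem_unitaryGroup hV, mul_one]
  ring

variable {R : Type*} [CommRing R]

theorem trace_mul_commutator_diagonal (V H : Matrix n n R) (p : n → R) :
    (V * (H * diagonal p - diagonal p * H)).trace = ∑ j, ∑ k, H j k * V k j * (p k - p j) := by
  have h : H * diagonal p - diagonal p * H = of fun j k => H j k * (p k - p j) := by
    ext j k
    simp [mul_sub, mul_comm]
  simp only [h, trace, diag, mul_apply, of_apply]
  rw [Finset.sum_comm]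
  exact Finset.sum_congr rfl fun j _ => Finset.sum_congr rfl fun k _ => by ring

theorem trace_mul_commutator_conj [StarRing R] {U : Matrix n n R} (hU : U ∈ unitaryGroup n R)
    (V H P : Matrix n n R) :
    (V * (H * (U * P * star U) - U * P * star U * H)).trace =
      (star U * V * U * (star U * H * U * P - P * (star U * H * U))).trace := by
  have hU₁ : U * star U = 1 := mem_unitaryGroup_iff.mp hU
  have hU₁' (X : Matrix n n R) : U * (star U * X) = X := by
    rw [← Matrix.mul_assoc, hU₁, Matrix.one_mul]
  calc (V * (H * (U * P * star U) - U * P * star U * H)).trace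
      = (U * (star U * V * U * (star U * H * U * P - P * (star U * H * U))) * star U).trace := by
        simp only [Matrix.mul_sub, Matrix.sub_mul, Matrix.mul_assoc, hU₁, hU₁', Matrix.mul_one]
    _ = _ := by
        rw [trace_mul_cycle, mem_unitaryGroup_iff'.mp hU, Matrix.one_mul]

end Matrix

namespace Paper

variable {n : Type*} [Fintype n] [DecidableEq n]

theorem msqrt_eq_cfcSqrt {A : Matrix n n ℂ} (hA : A.PosSemidef) : msqrt A = CFC.sqrt A := by
  rw [msqrt, dif_pos hA, CFC.sqrt_eq_cfc,
    cfc_nnreal_eq_real _ A (Matrix.nonneg_iff_posSemidef.mpr hA), hA.1.cfc_eq]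
  simp only [IsHermitian.cfc, Unitary.conjStarAlgAut_apply]
  congr 3
  funext i
  simp [Real.coe_sqrt, Real.coe_toNNReal', max_eq_left (hA.eigenvalues_nonneg i)]

theorem traceNorm_eq_re_trace_abs (A : Matrix n n ℂ) : traceNorm A = (CFC.abs A).trace.re := by
  rw [traceNorm, CFC.abs, msqrt_eq_cfcSqrt (Matrix.posSemidef_conjTranspose_mul_self A),
    Matrix.star_eq_conjTranspose]

theorem traceNorm_nonneg (A : Matrix n n ℂ) : 0 ≤ traceNorm A := by
  rw [traceNorm_eq_re_trace_abs]
  exact (Complex.le_def.mp (Matrix.nonneg_iff_posSemidef.mp (CFC.abs_nonneg A)).trace_nonneg).1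

theorem exists_mem_unitary_traceNorm_le_norm_trace_mul {A : Matrix n n ℂ} (hA : Aᴴ = -A) :
    ∃ S ∈ unitary (Matrix n n ℂ), traceNorm A ≤ ‖(S * A).trace‖ := by
  have hM : (Complex.I • A).IsHermitian := by
    rw [IsHermitian, conjTranspose_smul, hA, Complex.star_def, Complex.conj_I, smul_neg, neg_smul,
      neg_neg]
  obtain ⟨S, hS, hSM⟩ := hM.exists_mem_unitary_mul_eq_abs
  refine ⟨S, hS, ?_⟩
  calc traceNorm A = (CFC.abs (Complex.I • A)).trace.re := by
        rw [traceNorm_eq_re_trace_abs, CFC.abs_smul, Complex.norm_I, one_smul]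
    _ = (Complex.I * (S * A).trace).re := by rw [← hSM, mul_smul_comm, trace_smul, smul_eq_mul]
    _ ≤ ‖(S * A).trace‖ := by simpa using Complex.re_le_norm (Complex.I * (S * A).trace)

theorem QFI_eq_sum {ρ : Matrix n n ℂ} (hρ : ρ.IsHermitian) (H : Matrix n n ℂ) :
    QFI ρ H = 2 * ∑ j, ∑ k, (hρ.eigenvalues j - hρ.eigenvalues k) ^ 2 /
      (hρ.eigenvalues j + hρ.eigenvalues k) *
        ‖(star (hρ.eigenvectorUnitary : Matrix n n ℂ) * H * hρ.eigenvectorUnitary) j k‖ ^ 2 := by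
  rw [QFI, dif_pos hρ]
  congr 1
  -- the case distinction in `QFI` is redundant, as division by zero gives `0`
  refine Finset.sum_congr rfl fun j _ => Finset.sum_congr rfl fun k _ => ?_
  rw [star_col_dotProduct_mulVec_col]
  split_ifs with h
  · simp [h]
  · rfl

theorem norm_trace_mul_commutator_sq_le_QFI {ρ : Matrix n n ℂ} (hρ : ρ.PosSemidef)
    (htr : ρ.trace = 1) (H : Matrix n n ℂ) {V : Matrix n n ℂ} (hV : V ∈ unitaryGroup n ℂ) :
    ‖(V * (H * ρ - ρ * H)).trace‖ ^ 2 ≤ QFI ρ H := by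
  set U : Matrix n n ℂ := (hρ.1.eigenvectorUnitary : Matrix n n ℂ)
  set p := hρ.1.eigenvalues
  set H' := star U * H * U
  set V' := star U * V * U
  have hV' : V' ∈ unitaryGroup n ℂ := mul_mem (mul_mem (Unitary.star_mem (SetLike.coe_mem _)) hV)
    (SetLike.coe_mem _)
  have hp : ∑ i, p i = 1 := by
    have h := hρ.1.trace_eq_sum_eigenvalues
    rw [htr] at h
    exact Complex.ofReal_injective (by push_cast; exact h.symm)
  have htrace :
      (V * (H * ρ - ρ * H)).trace = ∑ j, ∑ k, H' j k * V' k j * ((p k - p j : ℝ) : ℂ) := by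
    conv_lhs => rw [hρ.1.spectral_theorem, Unitary.conjStarAlgAut_apply]
    rw [trace_mul_commutator_conj (SetLike.coe_mem _), trace_mul_commutator_diagonal]
    push_cast
    rfl
  have hnorm : ‖(V * (H * ρ - ρ * H)).trace‖ ≤ ∑ j, ∑ k, ‖H' j k‖ * ‖V' k j‖ * |p j - p k| := by
    rw [htrace]
    refine (norm_sum_le _ _).trans (Finset.sum_le_sum fun j _ => (norm_sum_le _ _).trans ?_)
    simp only [norm_mul, Complex.norm_real, Real.norm_eq_abs, abs_sub_comm, le_refl]
  calc ‖(V * (H * ρ - ρ * H)).trace‖ ^ 2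
      ≤ (∑ j, ∑ k, ‖H' j k‖ * ‖V' k j‖ * |p j - p k|) ^ 2 :=
        pow_le_pow_left₀ (norm_nonneg _) hnorm 2
    _ ≤ (∑ j, ∑ k, (p j - p k) ^ 2 / (p j + p k) * ‖H' j k‖ ^ 2) *
          ∑ j, ∑ k, (p j + p k) * ‖V' k j‖ ^ 2 :=
        Finset.sq_sum_mul_mul_abs_sub_le hρ.eigenvalues_nonneg _ _
    _ = QFI ρ H := by
        rw [sum_sum_add_mul_norm_sq_of_mem_unitaryGroup hV', hp, QFI_eq_sum hρ.1]
        ring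

/-- the quantum Fisher information is lower bounded by the squared
trace norm of the commutator: `F(ρ,H) ≥ ‖[H,ρ]‖₁²`. -/
theorem qfi_ge_traceNorm_commutator_sq {D : ℕ} (ρ H : Matrix (Fin D) (Fin D) ℂ)
    (hρ : ρ.PosSemidef) (htr : ρ.trace = 1) (hH : H.IsHermitian) :
    traceNorm (H * ρ - ρ * H) ^ 2 ≤ QFI ρ H := by
  have hskew : (H * ρ - ρ * H)ᴴ = -(H * ρ - ρ * H) := by
    rw [conjTranspose_sub, conjTranspose_mul, conjTranspose_mul, hρ.1.eq, hH.eq, neg_sub]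
  obtain ⟨S, hS, hle⟩ := exists_mem_unitary_traceNorm_le_norm_trace_mul hskew
  calc traceNorm (H * ρ - ρ * H) ^ 2 ≤ ‖(S * (H * ρ - ρ * H)).trace‖ ^ 2 :=
        pow_le_pow_left₀ (traceNorm_nonneg _) hle 2
    _ ≤ QFI ρ H := norm_trace_mul_commutator_sq_le_QFI hρ htr H hS

end Paper
end
end

section
/- Let ρ ∈ M_D(ℂ) be a density matrix and H ∈ M_D(ℂ) be Hermitian. Then the quantum Fisher information satisfies F(ρ,H) ≥ ‖[H,ρ]‖_HS², where [H,ρ] := Hρ − ρH and ‖A‖_HS := √(tr(A†A)) is the Hilbert–Schmidt (Frobenius) norm. -/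
/-!
In an eigenbasis of `ρ`, with eigenvalues `p_j` and `G = U† H U`, the commutator `[H, ρ]` has
entries `(p_k - p_j) G_jk`, and the Hilbert–Schmidt norm is unitarily invariant, so
`‖[H, ρ]‖_HS² = Σ (p_j - p_k)² |G_jk|²`. The quantum Fisher information is the same sum with
weights `2 (p_j - p_k)² / (p_j + p_k)`, which dominate `(p_j - p_k)²` termwise because the
eigenvalues of a density matrix lie in `[0, 1]`, so that `p_j + p_k ≤ 2`.
-/

open Matrix
open scoped ComplexOrder

noncomputable section

namespace Paper

/-- The Hilbert-Schmidt (Frobenius) norm `‖A‖_HS = √(tr(A†A))` of a matrix. -/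
def hsNorm {n : Type*} [Fintype n] [DecidableEq n] (A : Matrix n n ℂ) : ℝ :=
  Real.sqrt (Matrix.trace (Aᴴ * A)).re

open Finset Unitary

theorem re_trace_conjTranspose_mul_self {m n : Type*} [Fintype m] [Fintype n]
    (A : Matrix m n ℂ) : (Aᴴ * A).trace.re = ∑ i, ∑ j, ‖A i j‖ ^ 2 := by
  simp only [trace, diag_apply, mul_apply, conjTranspose_apply, RCLike.star_def,
    Complex.conj_mul', Complex.re_sum]
  rw [sum_comm]
  norm_cast

theorem sq_sub_le_two_mul_sq_sub_div_add {a b : ℝ} (hpos : 0 < a + b) (hle : a + b ≤ 2) :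
    (a - b) ^ 2 ≤ 2 * ((a - b) ^ 2 / (a + b)) := by
  rw [mul_div_assoc', le_div_iff₀ hpos]
  nlinarith [sq_nonneg (a - b)]

variable {n : Type*} [Fintype n]

theorem star_col_dotProduct_mulVec_col (U H : Matrix n n ℂ) (j k : n) :
    star (fun i => U i j) ⬝ᵥ (H *ᵥ fun i => U i k) = (Uᴴ * H * U) j k := by
  simp only [mul_apply, mulVec, dotProduct, conjTranspose_apply, Pi.star_apply, sum_mul, mul_sum]
  rw [sum_comm]
  exact sum_congr rfl fun l _ => sum_congr rfl fun i _ => by ring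

variable [DecidableEq n]

theorem eigenvalues_le_one_of_trace_eq_one {ρ : Matrix n n ℂ} (hρ : ρ.PosSemidef)
    (htr : ρ.trace = 1) (i : n) : hρ.1.eigenvalues i ≤ 1 := by
  have hsum : ∑ j, hρ.1.eigenvalues j = 1 := by
    simpa [htr] using congrArg Complex.re hρ.1.trace_eq_sum_eigenvalues.symm
  exact hsum ▸ single_le_sum (fun j _ => hρ.eigenvalues_nonneg j) (mem_univ i)

theorem hsNorm_sq (A : Matrix n n ℂ) : hsNorm A ^ 2 = ∑ i, ∑ j, ‖A i j‖ ^ 2 := by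
  rw [hsNorm, re_trace_conjTranspose_mul_self, Real.sq_sqrt (by positivity)]

theorem hsNorm_conjStarAlgAut (U : unitary (Matrix n n ℂ)) (A : Matrix n n ℂ) :
    hsNorm (conjStarAlgAut ℂ _ U A) = hsNorm A := by
  have h : (conjStarAlgAut ℂ _ U A)ᴴ * conjStarAlgAut ℂ _ U A =
      conjStarAlgAut ℂ _ U (Aᴴ * A) := by
    rw [← star_eq_conjTranspose, ← map_star, ← map_mul, star_eq_conjTranspose]
  rw [hsNorm, hsNorm, h, conjStarAlgAut_apply, trace_mul_cycle, coe_star_mul_self, one_mul]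

theorem commutator_diagonal_apply (G : Matrix n n ℂ) (d : n → ℂ) (j k : n) :
    (G * diagonal d - diagonal d * G) j k = (d k - d j) * G j k := by
  rw [Matrix.sub_apply, mul_diagonal, diagonal_mul]
  ring

theorem hsNorm_commutator_ofReal_diagonal_sq (G : Matrix n n ℂ) (d : n → ℝ) :
    hsNorm (G * diagonal (RCLike.ofReal ∘ d) - diagonal (RCLike.ofReal ∘ d) * G) ^ 2
      = ∑ j, ∑ k, (d j - d k) ^ 2 * ‖G j k‖ ^ 2 := by
  simp only [hsNorm_sq, commutator_diagonal_apply, norm_mul, mul_pow, Function.comp_apply,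
    ← RCLike.ofReal_sub, RCLike.norm_ofReal, sq_abs]
  refine sum_congr rfl fun j _ => sum_congr rfl fun k _ => ?_
  rw [← neg_sub, neg_sq]

theorem hsNorm_commutator_sq_eq_sum_eigenvalues {A : Matrix n n ℂ} (hA : A.IsHermitian)
    (H : Matrix n n ℂ) :
    hsNorm (H * A - A * H) ^ 2 = ∑ j, ∑ k, (hA.eigenvalues j - hA.eigenvalues k) ^ 2 *
      ‖((hA.eigenvectorUnitary : Matrix n n ℂ)ᴴ * H * hA.eigenvectorUnitary) j k‖ ^ 2 := by
  rw [← hsNorm_conjStarAlgAut (star hA.eigenvectorUnitary), map_sub, map_mul, map_mul,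
    hA.conjStarAlgAut_star_eigenvectorUnitary, hsNorm_commutator_ofReal_diagonal_sq]
  simp only [conjStarAlgAut_star_apply, star_eq_conjTranspose]

theorem qfi_ge_hsNorm_commutator_sq_general {D : ℕ} (ρ H : Matrix (Fin D) (Fin D) ℂ)
    (hρ : ρ.PosSemidef) (htr : ρ.trace = 1) :
    hsNorm (H * ρ - ρ * H) ^ 2 ≤ QFI ρ H := by
  have hp0 := hρ.eigenvalues_nonneg
  have hp1 := eigenvalues_le_one_of_trace_eq_one hρ htr
  rw [hsNorm_commutator_sq_eq_sum_eigenvalues hρ.1, QFI, dif_pos hρ.1, mul_sum]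
  refine sum_le_sum fun j _ => ?_
  rw [mul_sum]
  refine sum_le_sum fun k _ => ?_
  rw [star_col_dotProduct_mulVec_col]
  split_ifs with h
  · obtain ⟨hj, hk⟩ := (add_eq_zero_iff_of_nonneg (hp0 j) (hp0 k)).mp h
    simp [hj, hk]
  · rw [← mul_assoc]
    refine mul_le_mul_of_nonneg_right (sq_sub_le_two_mul_sq_sub_div_add ?_ ?_) (sq_nonneg _)
    · exact (add_nonneg (hp0 j) (hp0 k)).lt_of_ne' h
    · linarith [hp1 j, hp1 k]

/-- the quantum Fisher information is lower bounded by the squared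
Hilbert-Schmidt norm of the commutator: `F(ρ,H) ≥ ‖[H,ρ]‖_HS²`. -/
theorem qfi_ge_hsNorm_commutator_sq {D : ℕ} (ρ H : Matrix (Fin D) (Fin D) ℂ)
    (hρ : ρ.PosSemidef) (htr : ρ.trace = 1) (hH : H.IsHermitian) :
    hsNorm (H * ρ - ρ * H) ^ 2 ≤ QFI ρ H :=
  qfi_ge_hsNorm_commutator_sq_general ρ H hρ htr

end Paper
end
end
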